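/- Let n ≥ 1, d ≥ 1, and let ψ : (Fin n → Fin d) → ℂ satisfy ⟪φ, ψ⟫ = 0 for every symmetric vector φ. Then ψ is not a product state with all factors nonzero: there do not exist nonzero f₁, …, f_n : Fin d → ℂ with ψ j = ∏_i f_i (j i) for all j. In particular, any nonzero state orthogonal to the symmetric sector is entangled. -/

import Mathlib

/-!
Since `ℂ^d` is not a finite union of hyperplanes, there is a `g` pairing nontrivially with every
factor `fᵢ`. The product state `g ⊗ ⋯ ⊗ g` is symmetric, and its inner product with
`f₁ ⊗ ⋯ ⊗ f_n` factorizes as `∏ᵢ ⟪g, fᵢ⟫ ≠ 0`.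
-/

open Matrix

theorem exists_forall_dotProduct_ne_zero {ι κ K : Type*} [Finite ι] [Fintype κ] [Field K]
    [Infinite K] (v : ι → κ → K) (hv : ∀ i, v i ≠ 0) : ∃ g : κ → K, ∀ i, g ⬝ᵥ v i ≠ 0 := by
  classical
  let p : ι → Subspace K (κ → K) := fun i => LinearMap.ker ((dotProductBilin K K).flip (v i))
  have hp : ∀ i, p i ≠ ⊤ := by
    intro i htop
    obtain ⟨x, hx⟩ := Function.ne_iff.mp (hv i)
    have hsingle : Pi.single x 1 ∈ p i := htop ▸ Submodule.mem_top
    simp only [p, LinearMap.mem_ker, LinearMap.flip_apply, dotProductBilin_apply_apply,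
      single_dotProduct, one_mul] at hsingle
    exact hx hsingle
  have hcover : ⋃ i, (p i : Set (κ → K)) ≠ Set.univ := fun h =>
    let ⟨i, hi⟩ := Subspace.exists_eq_top_of_iUnion_eq_univ h
    hp i hi
  obtain ⟨g, hg⟩ := (Set.ne_univ_iff_exists_notMem _).mp hcover
  exact ⟨g, fun i hi => hg (Set.mem_iUnion.mpr ⟨i, by simpa [p] using hi⟩)⟩

theorem sum_prod_mul_prod_eq_prod_dotProduct {ι κ R : Type*} [Fintype ι] [DecidableEq ι]
    [Fintype κ] [CommSemiring R] (a b : ι → κ → R) :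
    ∑ j : ι → κ, (∏ i, a i (j i)) * ∏ i, b i (j i) = ∏ i, a i ⬝ᵥ b i := by
  simp only [dotProduct, Fintype.prod_sum, Finset.prod_mul_distrib]

theorem orthogonal_to_symmetric_not_product_general (n d : ℕ)
    (ψ : (Fin n → Fin d) → ℂ)
    (h : ∀ φ : (Fin n → Fin d) → ℂ,
      (∀ σ : Equiv.Perm (Fin n), ∀ j : Fin n → Fin d, φ (j ∘ σ) = φ j) →
      (∑ j, (starRingEnd ℂ) (φ j) * ψ j) = 0) :
    ¬ ∃ f : Fin n → Fin d → ℂ, (∀ i, f i ≠ 0) ∧ ∀ j, ψ j = ∏ i, f i (j i) := by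
  rintro ⟨f, hf, hψ⟩
  obtain rfl : ψ = fun j => ∏ i, f i (j i) := funext hψ
  obtain ⟨g, hg⟩ := exists_forall_dotProduct_ne_zero f hf
  have horth := h (fun j => ∏ i, (starRingEnd ℂ) (g (j i))) fun σ j =>
    Equiv.prod_comp σ fun i => (starRingEnd ℂ) (g (j i))
  simp only [map_prod, Complex.conj_conj, sum_prod_mul_prod_eq_prod_dotProduct] at horth
  exact Finset.prod_ne_zero_iff.mpr (fun i _ => hg i) horth

/-- **States orthogonal to the symmetric sector are entangled.**
If `ψ : (Fin n → Fin d) → ℂ` satisfies `⟪φ, ψ⟫ = 0` for every symmetric vector `φ`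
(i.e. every `φ` with `φ (j ∘ σ) = φ j` for all permutations `σ` and all `j`), then
`ψ` is not a product state with all factors nonzero. -/
theorem orthogonal_to_symmetric_not_product (n d : ℕ) (hn : 1 ≤ n) (hd : 1 ≤ d)
    (ψ : (Fin n → Fin d) → ℂ)
    (h : ∀ φ : (Fin n → Fin d) → ℂ,
      (∀ σ : Equiv.Perm (Fin n), ∀ j : Fin n → Fin d, φ (j ∘ σ) = φ j) →
      (∑ j, (starRingEnd ℂ) (φ j) * ψ j) = 0) :
    ¬ ∃ f : Fin n → Fin d → ℂ, (∀ i, f i ≠ 0) ∧ ∀ j, ψ j = ∏ i, f i (j i) :=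
  orthogonal_to_symmetric_not_product_general n d ψ h
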